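/- arXiv:1101.1398 — 8 statements merged into one kernel-verified Lean document; each statement's English description precedes it below -/
import Mathlib

section
/- Let N ≥ 1, let f : [0,1]^N → ℝ be a continuous, symmetric, affiliated probability density function, and let 0 = r_0 < r_1 < ⋯ < r_k = 1 be an arbitrary partition of [0,1]. Define the box-average T_B^k(f) : [0,1]^N → ℝ by T_B^k(f)(v) = (∫_{B(v)} f(u) du) / (∫_{B(v)} du), where B(v) = ∏_{n=1}^N (r_{I(v_n)−1}, r_{I(v_n)}] and I(v) = j if and only if v ∈ (r_{j−1}, r_j]. Then T_B^k(f) is affiliated. -/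
open MeasureTheory

/-- The index `I(v)` of the partition cell `(r_{j-1}, r_j]` containing `v`: the least `j`
with `v ≤ r j` (for `v ∈ (r_{j-1}, r_j]` and `r` increasing this is exactly `j`). -/
noncomputable def boxIdx (r : ℕ → ℝ) (v : ℝ) : ℕ :=
  sInf {j : ℕ | v ≤ r j}

/-- The box `B(v) = ∏ₙ (r_{I(vₙ)−1}, r_{I(vₙ)}]` containing `v`. -/
noncomputable def box (N : ℕ) (r : ℕ → ℝ) (v : Fin N → ℝ) : Set (Fin N → ℝ) :=
  {u | ∀ n, r (boxIdx r (v n) - 1) < u n ∧ u n ≤ r (boxIdx r (v n))}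

/-- The box average `T_B^k(f)(v) = (∫_{B(v)} f(u) du) / (∫_{B(v)} du)`. -/
noncomputable def boxT (N : ℕ) (r : ℕ → ℝ) (f : (Fin N → ℝ) → ℝ) (v : Fin N → ℝ) : ℝ :=
  (∫ u in box N r v, f u) / (∫ u in box N r v, (1 : ℝ))

/-- `f` is affiliated (MTP₂) on the set `s`: `f(x ∨ y) f(x ∧ y) ≥ f(x) f(y)` for `x, y ∈ s`,
where `⊔`/`⊓` are the componentwise max/min. -/
def AffiliatedOn {N : ℕ} (f : (Fin N → ℝ) → ℝ) (s : Set (Fin N → ℝ)) : Prop :=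
  ∀ x ∈ s, ∀ y ∈ s, f (x ⊔ y) * f (x ⊓ y) ≥ f x * f y

/-!
The box average at `v` is the mass of `f` on the grid box `B(v)` divided by the volume of
`B(v)`. Grid boxes behave like a lattice: if `p ∈ B(x)` and `q ∈ B(y)` then `p ⊔ q ∈ B(x ⊔ y)`
and `p ⊓ q ∈ B(x ⊓ y)`, and coordinatewise `{I(xₙ ⊔ yₙ), I(xₙ ⊓ yₙ)} = {I(xₙ), I(yₙ)}`, so
`|B(x ⊔ y)| |B(x ⊓ y)| = |B(x)| |B(y)|`. It therefore suffices to show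
`∫_{B(x)} f · ∫_{B(y)} f ≤ ∫_{B(x ⊔ y)} f · ∫_{B(x ⊓ y)} f`, which is the continuous four
functions (Ahlswede–Daykin) inequality applied to the restrictions of `f` to the four boxes.
That inequality follows by induction on the dimension and Tonelli's theorem from the
one-dimensional case. There, for `t ≤ s`, the hypothesis at `(s, t)`, `(t, s)`, `(s, s)` and
`(t, t)` yields `f₃ s f₄ t + f₃ t f₄ s ≤ f₁ s f₂ t + f₁ t f₂ s` by the elementary fact that
`a, b ≤ c` and `a b ≤ c d` imply `a + b ≤ c + d`; this inequality is symmetric in `s, t`, and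
integrating it over both variables gives twice the claim.
-/

open Set
open scoped ENNReal

namespace ENNReal

lemma add_le_add_of_mul_le_mul {a b c d : ℝ≥0∞} (hac : a ≤ c) (hbc : b ≤ c)
    (h : a * b ≤ c * d) : a + b ≤ c + d := by
  rcases eq_top_or_lt_top c with rfl | hc
  · simp
  rcases eq_top_or_lt_top d with rfl | hd
  · simp
  lift c to NNReal using hc.ne
  lift d to NNReal using hd.ne
  lift a to NNReal using (hac.trans_lt hc).ne
  lift b to NNReal using (hbc.trans_lt hc).ne
  norm_cast at hac hbc h ⊢
  rw [← NNReal.coe_le_coe] at hac hbc h ⊢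
  push_cast at h ⊢
  rcases c.coe_nonneg.eq_or_lt with hc0 | hc0
  · nlinarith [a.coe_nonneg, b.coe_nonneg, d.coe_nonneg]
  · nlinarith [mul_nonneg (sub_nonneg.2 hac) (sub_nonneg.2 hbc)]

end ENNReal

section FourFunctions

variable {α : Type*} [MeasurableSpace α] {μ : Measure α}

lemma lintegral_lintegral_mul_add_mul_swap {f g : α → ℝ≥0∞} (hf : Measurable f)
    (hg : Measurable g) :
    ∫⁻ s, ∫⁻ t, (f s * g t + f t * g s) ∂μ ∂μ = 2 * ((∫⁻ s, f s ∂μ) * ∫⁻ s, g s ∂μ) := by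
  simp_rw [lintegral_add_left (hg.const_mul _), lintegral_const_mul _ hg,
    lintegral_mul_const _ hf]
  rw [lintegral_add_left (hf.mul_const _), lintegral_mul_const _ hf, lintegral_const_mul _ hg]
  ring

theorem lintegral_four_functions [LinearOrder α] {f₁ f₂ f₃ f₄ : α → ℝ≥0∞}
    (hf₁ : Measurable f₁) (hf₂ : Measurable f₂) (hf₃ : Measurable f₃) (hf₄ : Measurable f₄)
    (h : ∀ s t, f₃ s * f₄ t ≤ f₁ (s ⊔ t) * f₂ (s ⊓ t)) :
    (∫⁻ s, f₃ s ∂μ) * ∫⁻ s, f₄ s ∂μ ≤ (∫⁻ s, f₁ s ∂μ) * ∫⁻ s, f₂ s ∂μ := by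
  have pair_of_le : ∀ s t, t ≤ s → f₃ s * f₄ t + f₃ t * f₄ s ≤ f₁ s * f₂ t + f₁ t * f₂ s := by
    intro s t hts
    have hst := h s t
    have hts' := h t s
    have hss := h s s
    have htt := h t t
    simp only [sup_of_le_left hts, inf_of_le_right hts, sup_of_le_right hts,
      inf_of_le_left hts, sup_idem, inf_idem] at hst hts' hss htt
    refine ENNReal.add_le_add_of_mul_le_mul hst hts' ?_
    calc f₃ s * f₄ t * (f₃ t * f₄ s) = f₃ s * f₄ s * (f₃ t * f₄ t) := by ring
      _ ≤ f₁ s * f₂ s * (f₁ t * f₂ t) := mul_le_mul' hss htt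
      _ = f₁ s * f₂ t * (f₁ t * f₂ s) := by ring
  have pair : ∀ s t, f₃ s * f₄ t + f₃ t * f₄ s ≤ f₁ s * f₂ t + f₁ t * f₂ s := by
    intro s t
    rcases le_total t s with hts | hst
    · exact pair_of_le s t hts
    · simpa only [add_comm] using pair_of_le t s hst
  have := lintegral_mono (μ := μ) fun s => lintegral_mono (μ := μ) (pair s)
  rwa [lintegral_lintegral_mul_add_mul_swap hf₃ hf₄,
    lintegral_lintegral_mul_add_mul_swap hf₁ hf₂,
    ENNReal.mul_le_mul_iff_right two_ne_zero ENNReal.ofNat_ne_top] at this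

end FourFunctions

section Pi

variable {α : Type*} [MeasurableSpace α] {N : ℕ}

lemma measurable_fin_cons :
    Measurable fun p : α × (Fin N → α) => (Fin.cons p.1 p.2 : Fin (N + 1) → α) := by
  rw [measurable_pi_iff]
  intro i
  cases i using Fin.cases
  · exact measurable_fst
  · simpa only [Fin.cons_succ] using measurable_snd.eval

lemma lintegral_pi_fin_succ (μ : Measure α) [SigmaFinite μ]
    {f : (Fin (N + 1) → α) → ℝ≥0∞} (hf : Measurable f) :
    ∫⁻ x, f x ∂(Measure.pi fun _ => μ) =
      ∫⁻ s, ∫⁻ z, f (Fin.cons s z) ∂(Measure.pi fun _ => μ) ∂μ := by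
  have e := (measurePreserving_piFinSuccAbove (fun _ : Fin (N + 1) => μ) 0).symm
  rw [← e.lintegral_comp hf]
  simp only [MeasurableEquiv.piFinSuccAbove_symm_apply, Fin.insertNthEquiv,
    Fin.insertNth_zero', Equiv.coe_fn_mk]
  exact lintegral_prod _ (hf.comp measurable_fin_cons).aemeasurable

omit [MeasurableSpace α] in
lemma Fin.cons_sup_cons [Max α] (s t : α) (p q : Fin N → α) :
    (Fin.cons s p : Fin (N + 1) → α) ⊔ Fin.cons t q = Fin.cons (s ⊔ t) (p ⊔ q) := by
  ext i
  cases i using Fin.cases <;> rfl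

omit [MeasurableSpace α] in
lemma Fin.cons_inf_cons [Min α] (s t : α) (p q : Fin N → α) :
    (Fin.cons s p : Fin (N + 1) → α) ⊓ Fin.cons t q = Fin.cons (s ⊓ t) (p ⊓ q) := by
  ext i
  cases i using Fin.cases <;> rfl

end Pi

theorem lintegral_pi_four_functions {α : Type*} [MeasurableSpace α] [LinearOrder α]
    (μ : Measure α) [SigmaFinite μ] {N : ℕ} {f₁ f₂ f₃ f₄ : (Fin N → α) → ℝ≥0∞}
    (hf₁ : Measurable f₁) (hf₂ : Measurable f₂) (hf₃ : Measurable f₃) (hf₄ : Measurable f₄)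
    (h : ∀ x y, f₃ x * f₄ y ≤ f₁ (x ⊔ y) * f₂ (x ⊓ y)) :
    (∫⁻ x, f₃ x ∂(Measure.pi fun _ => μ)) * ∫⁻ x, f₄ x ∂(Measure.pi fun _ => μ) ≤
      (∫⁻ x, f₁ x ∂(Measure.pi fun _ => μ)) * ∫⁻ x, f₂ x ∂(Measure.pi fun _ => μ) := by
  induction N with
  | zero =>
    simp only [Measure.pi_of_empty (fun _ : Fin 0 => μ) default, lintegral_dirac' _ hf₁,
      lintegral_dirac' _ hf₂, lintegral_dirac' _ hf₃, lintegral_dirac' _ hf₄]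
    simpa only [sup_idem, inf_idem] using h default default
  | succ N ih =>
    have slice {f : (Fin (N + 1) → α) → ℝ≥0∞} (hf : Measurable f) (s : α) :
        Measurable fun z : Fin N → α => f (Fin.cons s z) :=
      hf.comp (measurable_fin_cons.comp (measurable_const.prodMk measurable_id))
    have slice_integral {f : (Fin (N + 1) → α) → ℝ≥0∞} (hf : Measurable f) :
        Measurable fun s => ∫⁻ z, f (Fin.cons s z) ∂(Measure.pi fun _ => μ) :=
      (hf.comp measurable_fin_cons).lintegral_prod_right'
    simp only [lintegral_pi_fin_succ μ hf₁, lintegral_pi_fin_succ μ hf₂,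
      lintegral_pi_fin_succ μ hf₃, lintegral_pi_fin_succ μ hf₄]
    refine lintegral_four_functions (slice_integral hf₁)
      (slice_integral hf₂) (slice_integral hf₃) (slice_integral hf₄) fun s t => ?_
    refine ih (slice hf₁ _) (slice hf₂ _) (slice hf₃ _) (slice hf₄ _) fun p q => ?_
    simpa only [Fin.cons_sup_cons, Fin.cons_inf_cons] using h (Fin.cons s p) (Fin.cons t q)

theorem AffiliatedOn.setIntegral_mul_le {μ : Measure ℝ} [SigmaFinite μ] {N : ℕ}
    {f : (Fin N → ℝ) → ℝ} {s A B C D : Set (Fin N → ℝ)}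
    (haff : AffiliatedOn f s) (hfm : Measurable (s.indicator f))
    (hfi : IntegrableOn f s (Measure.pi fun _ => μ)) (hf₀ : ∀ x ∈ s, 0 ≤ f x)
    (hA : MeasurableSet A) (hB : MeasurableSet B) (hC : MeasurableSet C) (hD : MeasurableSet D)
    (hAs : A ⊆ s) (hBs : B ⊆ s) (hCs : C ⊆ s) (hDs : D ⊆ s)
    (hsup : ∀ a ∈ A, ∀ b ∈ B, a ⊔ b ∈ C) (hinf : ∀ a ∈ A, ∀ b ∈ B, a ⊓ b ∈ D) :
    (∫ x in A, f x ∂(Measure.pi fun _ => μ)) * ∫ x in B, f x ∂(Measure.pi fun _ => μ) ≤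
      (∫ x in C, f x ∂(Measure.pi fun _ => μ)) * ∫ x in D, f x ∂(Measure.pi fun _ => μ) := by
  set F : Set (Fin N → ℝ) → (Fin N → ℝ) → ℝ≥0∞ := fun t => t.indicator fun x => .ofReal (f x)
  have hF {t} (ht : MeasurableSet t) (hts : t ⊆ s) : Measurable (F t) := by
    have : F t = t.indicator fun x => .ofReal (s.indicator f x) :=
      indicator_congr fun x hx => by rw [indicator_of_mem (hts hx)]
    rw [this]
    exact (ENNReal.measurable_ofReal.comp hfm).indicator ht
  have hI₀ {t} (ht : MeasurableSet t) (hts : t ⊆ s) : 0 ≤ ∫ x in t, f x ∂(Measure.pi fun _ => μ) :=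
    setIntegral_nonneg ht fun x hx => hf₀ x (hts hx)
  have hofReal {t} (ht : MeasurableSet t) (hts : t ⊆ s) :
      ENNReal.ofReal (∫ x in t, f x ∂(Measure.pi fun _ => μ)) =
        ∫⁻ x, F t x ∂(Measure.pi fun _ => μ) := by
    rw [lintegral_indicator ht, ofReal_integral_eq_lintegral_ofReal (hfi.mono_set hts)
      ((ae_restrict_iff' ht).2 (ae_of_all _ fun x hx => hf₀ x (hts hx)))]
  have hpoint : ∀ a b, F A a * F B b ≤ F C (a ⊔ b) * F D (a ⊓ b) := by
    intro a b
    by_cases hab : a ∈ A ∧ b ∈ B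
    · obtain ⟨ha, hb⟩ := hab
      simp only [F, indicator_of_mem ha, indicator_of_mem hb, indicator_of_mem (hsup a ha b hb),
        indicator_of_mem (hinf a ha b hb), ← ENNReal.ofReal_mul (hf₀ a (hAs ha)),
        ← ENNReal.ofReal_mul (hf₀ _ (hCs (hsup a ha b hb)))]
      exact ENNReal.ofReal_le_ofReal (haff a (hAs ha) b (hBs hb))
    · rcases not_and_or.1 hab with ha | hb
      · simp [F, indicator_of_notMem ha]
      · simp [F, indicator_of_notMem hb]
  have key := lintegral_pi_four_functions μ (hF hC hCs) (hF hD hDs) (hF hA hAs)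
    (hF hB hBs) hpoint
  rw [← hofReal hA hAs, ← hofReal hB hBs, ← hofReal hC hCs, ← hofReal hD hDs,
    ← ENNReal.ofReal_mul (hI₀ hA hAs), ← ENNReal.ofReal_mul (hI₀ hC hCs)] at key
  exact (ENNReal.ofReal_le_ofReal_iff (mul_nonneg (hI₀ hC hCs) (hI₀ hD hDs))).1 key

/-- `j - 1` truncates, so the cell of index `0` is empty. -/
def cell (r : ℕ → ℝ) (j : ℕ) : Set ℝ := Ioc (r (j - 1)) (r j)

lemma box_eq_pi (N : ℕ) (r : ℕ → ℝ) (v : Fin N → ℝ) :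
    box N r v = univ.pi fun n => cell r (boxIdx r (v n)) := by
  ext u
  simp [box, cell]

lemma measurableSet_box (N : ℕ) (r : ℕ → ℝ) (v : Fin N → ℝ) : MeasurableSet (box N r v) := by
  rw [box_eq_pi]
  exact .univ_pi fun _ => measurableSet_Ioc

section Partition

variable {r : ℕ → ℝ} {k : ℕ}

lemma boxIdx_le_of_le {v : ℝ} (hv : v ≤ r k) : boxIdx r v ≤ k :=
  Nat.sInf_le hv

lemma monotoneOn_boxIdx : MonotoneOn (boxIdx r) (Iic (r k)) :=
  fun _ _ _ hb hab => Nat.sInf_le (hab.trans (Nat.sInf_mem (s := {j | _ ≤ r j}) ⟨k, hb⟩))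

lemma lt_of_mem_cell_of_lt (hr : MonotoneOn r (Iic k)) {i j : ℕ} (hjk : j ≤ k) {a b : ℝ}
    (ha : a ∈ cell r i) (hb : b ∈ cell r j) (hij : i < j) : a < b :=
  calc a ≤ r i := ha.2
    _ ≤ r (j - 1) := hr (mem_Iic.2 (by omega)) (mem_Iic.2 (by omega)) (by omega)
    _ < b := hb.1

lemma sup_mem_cell_and_inf_mem_cell (hr : MonotoneOn r (Iic k)) {i j : ℕ} (hik : i ≤ k)
    (hjk : j ≤ k) {a b : ℝ} (ha : a ∈ cell r i) (hb : b ∈ cell r j) :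
    a ⊔ b ∈ cell r (i ⊔ j) ∧ a ⊓ b ∈ cell r (i ⊓ j) := by
  wlog hij : i ≤ j generalizing i j a b
  · simpa only [sup_comm, inf_comm] using this hjk hik hb ha (by omega)
  rcases hij.lt_or_eq with hij | rfl
  · have hab := (lt_of_mem_cell_of_lt hr hjk ha hb hij).le
    rw [sup_of_le_right hij.le, inf_of_le_left hij.le, sup_of_le_right hab, inf_of_le_left hab]
    exact ⟨hb, ha⟩
  · simp only [sup_idem, inf_idem]
    exact ⟨⟨lt_sup_of_lt_left ha.1, sup_le ha.2 hb.2⟩,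
      ⟨lt_inf_iff.2 ⟨ha.1, hb.1⟩, inf_le_of_left_le ha.2⟩⟩

lemma cell_subset_Ioc (hr : MonotoneOn r (Iic k)) {j : ℕ} (hjk : j ≤ k) :
    cell r j ⊆ Ioc (r 0) (r k) :=
  Ioc_subset_Ioc (hr (mem_Iic.2 (Nat.zero_le _)) (mem_Iic.2 (by omega)) (Nat.zero_le _))
    (hr (mem_Iic.2 hjk) (mem_Iic.2 le_rfl) hjk)

lemma boxIdx_sup {a b : ℝ} (ha : a ≤ r k) (hb : b ≤ r k) :
    boxIdx r (a ⊔ b) = boxIdx r a ⊔ boxIdx r b :=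
  monotoneOn_boxIdx.map_max (mem_Iic.2 ha) (mem_Iic.2 hb)

lemma boxIdx_inf {a b : ℝ} (ha : a ≤ r k) (hb : b ≤ r k) :
    boxIdx r (a ⊓ b) = boxIdx r a ⊓ boxIdx r b :=
  monotoneOn_boxIdx.map_min (mem_Iic.2 ha) (mem_Iic.2 hb)

variable {N : ℕ} {x y : Fin N → ℝ}

lemma sup_mem_box_and_inf_mem_box (hr : MonotoneOn r (Iic k)) (hx : ∀ n, x n ≤ r k)
    (hy : ∀ n, y n ≤ r k) {p q : Fin N → ℝ} (hp : p ∈ box N r x) (hq : q ∈ box N r y) :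
    p ⊔ q ∈ box N r (x ⊔ y) ∧ p ⊓ q ∈ box N r (x ⊓ y) := by
  simp only [box_eq_pi, mem_univ_pi, Pi.sup_apply, Pi.inf_apply, boxIdx_sup (hx _) (hy _),
    boxIdx_inf (hx _) (hy _)] at hp hq ⊢
  exact forall_and.1 fun n => sup_mem_cell_and_inf_mem_cell hr (boxIdx_le_of_le (hx n))
    (boxIdx_le_of_le (hy n)) (hp n) (hq n)

lemma box_subset_Icc (hr : MonotoneOn r (Iic k)) (hx : ∀ n, x n ≤ r k) :
    box N r x ⊆ Icc (fun _ => r 0) (fun _ => r k) := by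
  intro u hu
  rw [box_eq_pi, mem_univ_pi] at hu
  have hu' (n : Fin N) := cell_subset_Ioc hr (boxIdx_le_of_le (hx n)) (hu n)
  exact ⟨fun n => (hu' n).1.le, fun n => (hu' n).2⟩

lemma volume_box_sup_mul_volume_box_inf (hx : ∀ n, x n ≤ r k) (hy : ∀ n, y n ≤ r k) :
    volume (box N r (x ⊔ y)) * volume (box N r (x ⊓ y)) =
      volume (box N r x) * volume (box N r y) := by
  simp only [box_eq_pi, volume_pi_pi, ← Finset.prod_mul_distrib, Pi.sup_apply, Pi.inf_apply,
    boxIdx_sup (hx _) (hy _), boxIdx_inf (hx _) (hy _)]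
  exact Finset.prod_congr rfl fun n _ => fn_max_mul_fn_min (fun j => volume (cell r j)) _ _

end Partition

theorem box_average_of_affiliated_is_affiliated_general (N : ℕ)
    (f : (Fin N → ℝ) → ℝ)
    (hcont : ContinuousOn f (Set.Icc 0 1))
    (hnonneg : ∀ v ∈ Set.Icc (0 : Fin N → ℝ) 1, 0 ≤ f v)
    (haff : AffiliatedOn f (Set.Icc 0 1))
    (k : ℕ) (r : ℕ → ℝ)
    (hr0 : r 0 = 0) (hrk : r k = 1)
    (hmono : ∀ j < k, r j < r (j + 1)) :
    AffiliatedOn (boxT N r f) (Set.Icc 0 1) := by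
  classical
  intro x hx y hy
  have hr : MonotoneOn r (Iic k) := (strictMonoOn_Iic_of_lt_succ hmono).monotoneOn
  have hxk (n : Fin N) : x n ≤ r k := hrk ▸ hx.2 n
  have hyk (n : Fin N) : y n ≤ r k := hrk ▸ hy.2 n
  have hbox {v : Fin N → ℝ} (hv : ∀ n, v n ≤ r k) : box N r v ⊆ Icc 0 1 :=
    (box_subset_Icc hr hv).trans (by rw [hr0, hrk]; rfl)
  have hlattice {p q} (hp : p ∈ box N r x) (hq : q ∈ box N r y) :=
    sup_mem_box_and_inf_mem_box hr hxk hyk hp hq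
  have hfm : Measurable ((Icc (0 : Fin N → ℝ) 1).indicator f) := by
    rw [← piecewise_eq_indicator]
    exact hcont.measurable_piecewise continuousOn_const measurableSet_Icc
  have hint := haff.setIntegral_mul_le (μ := volume) hfm
    (hcont.integrableOn_compact isCompact_Icc) hnonneg
    (measurableSet_box N r x) (measurableSet_box N r y) (measurableSet_box N r _)
    (measurableSet_box N r _) (hbox hxk) (hbox hyk) (hbox fun n => sup_le (hxk n) (hyk n))
    (hbox fun n => inf_le_of_left_le (hxk n)) (fun p hp q hq => (hlattice hp hq).1)
    (fun p hp q hq => (hlattice hp hq).2)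
  have hvol := congrArg ENNReal.toReal (volume_box_sup_mul_volume_box_inf (r := r) hxk hyk)
  simp only [ENNReal.toReal_mul, ← measureReal_def] at hvol
  simp only [boxT, setIntegral_one_eq_measureReal]
  rw [ge_iff_le, div_mul_div_comm, div_mul_div_comm, hvol]
  exact div_le_div_of_nonneg_right hint (by positivity)

/-- If `f` is a continuous, symmetric, affiliated probability density on
`[0,1]^N` and `0 = r₀ < r₁ < ⋯ < r_k = 1` is an arbitrary partition of `[0,1]`, then the
box-average grid distribution `T_B^k(f)` is affiliated. -/
theorem box_average_of_affiliated_is_affiliated (N : ℕ) (hN : 1 ≤ N)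
    (f : (Fin N → ℝ) → ℝ)
    (hcont : ContinuousOn f (Set.Icc 0 1))
    (hnonneg : ∀ v ∈ Set.Icc (0 : Fin N → ℝ) 1, 0 ≤ f v)
    (hprob : ∫ v in Set.Icc (0 : Fin N → ℝ) 1, f v = 1)
    (hsymm : ∀ (φ : Equiv.Perm (Fin N)) (v : Fin N → ℝ), f (v ∘ φ) = f v)
    (haff : AffiliatedOn f (Set.Icc 0 1))
    (k : ℕ) (hk : 0 < k) (r : ℕ → ℝ)
    (hr0 : r 0 = 0) (hrk : r k = 1)
    (hmono : ∀ j < k, r j < r (j + 1)) :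
    AffiliatedOn (boxT N r f) (Set.Icc 0 1) :=
  box_average_of_affiliated_is_affiliated_general N f hcont hnonneg haff k r hr0 hrk hmono
end

section
/- Let N ≥ 1 and let f : [0,1]^N → ℝ be a continuous, symmetric probability density function. For each positive integer k define the equispaced grid distribution T^k(f)(v) = k^N · ∫_{S(v)} f(u) du, where S(v) is the grid cell of side 1/k containing v. If T^k(f) is affiliated for every positive integer k, then f is affiliated. -/
open MeasureTheory

/-- The equispaced grid cell of side `1/k` containing `v`:
`S(v) = ∏ₙ ((⌈k vₙ⌉ − 1)/k, ⌈k vₙ⌉/k]`. -/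
def gridCell (N k : ℕ) (v : Fin N → ℝ) : Set (Fin N → ℝ) :=
  {u | ∀ n, ((⌈(k : ℝ) * v n⌉ : ℝ) - 1) / k < u n ∧ u n ≤ (⌈(k : ℝ) * v n⌉ : ℝ) / k}

/-- The grid distribution `T^k(f)(v) = k^N ∫_{S(v)} f(u) du`. -/
noncomputable def gridT (N k : ℕ) (f : (Fin N → ℝ) → ℝ) (v : Fin N → ℝ) : ℝ :=
  (k : ℝ) ^ N * ∫ u in gridCell N k v, f u

/-!
`gridT N k f v` is the average of `f` over a cell of diameter at most `1/k` containing `v`, so by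
continuity `T^k f → f` pointwise at interior points of the cube. Affiliation passes to pointwise
limits on the open cube, which is a sublattice, and then to its closure `[0,1]^N` by continuity
of `f`.
-/

open Filter Topology Set

lemma gridCell_eq_pi (N k : ℕ) (v : Fin N → ℝ) :
    gridCell N k v = univ.pi fun n =>
      Ioc (((⌈(k : ℝ) * v n⌉ : ℝ) - 1) / k) ((⌈(k : ℝ) * v n⌉ : ℝ) / k) := by
  ext u
  simp [gridCell, Set.mem_pi]

lemma volume_gridCell {N k : ℕ} (hk : 0 < k) (v : Fin N → ℝ) :
    volume (gridCell N k v) = ENNReal.ofReal ((k : ℝ)⁻¹ ^ N) := by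
  have hk' : (k : ℝ) ≠ 0 := by positivity
  have hside : ∀ c : ℝ, c / k - (c - 1) / k = (k : ℝ)⁻¹ := fun c => by field_simp; ring
  simp only [gridCell_eq_pi, volume_pi_pi, Real.volume_Ioc, hside, Finset.prod_const,
    Finset.card_univ, Fintype.card_fin, ENNReal.ofReal_pow (inv_nonneg.2 (Nat.cast_nonneg k))]

lemma gridCell_subset_closedBall {N k : ℕ} (hk : 0 < k) (v : Fin N → ℝ) :
    gridCell N k v ⊆ Metric.closedBall v (k : ℝ)⁻¹ := by
  intro u hu
  have hk' : (0 : ℝ) < k := by exact_mod_cast hk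
  refine (dist_pi_le_iff (by positivity)).2 fun n => ?_
  obtain ⟨hlo, hhi⟩ := hu n
  rw [div_lt_iff₀ hk'] at hlo
  rw [le_div_iff₀ hk'] at hhi
  have := Int.le_ceil ((k : ℝ) * v n)
  have := Int.ceil_lt_add_one ((k : ℝ) * v n)
  rw [Real.dist_eq, abs_sub_le_iff, ← one_div, le_div_iff₀' hk', le_div_iff₀' hk']
  constructor <;> linarith

lemma tendsto_gridCell_smallSets (N : ℕ) (v : Fin N → ℝ) :
    Tendsto (fun k => gridCell N k v) atTop (𝓝 v).smallSets := by
  rw [tendsto_smallSets_iff]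
  intro s hs
  obtain ⟨ε, hε, hball⟩ := Metric.mem_nhds_iff.1 hs
  obtain ⟨K, hK⟩ := exists_nat_gt ε⁻¹
  filter_upwards [eventually_gt_atTop K] with k hk
  have hk0 : 0 < k := (Nat.zero_le K).trans_lt hk
  refine (gridCell_subset_closedBall hk0 v).trans ((Metric.closedBall_subset_ball ?_).trans hball)
  exact inv_lt_of_inv_lt₀ hε (hK.trans (by exact_mod_cast hk))

lemma gridT_eq_setAverage {N k : ℕ} (hk : 0 < k) (f : (Fin N → ℝ) → ℝ) (v : Fin N → ℝ) :
    gridT N k f v = ⨍ u in gridCell N k v, f u := by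
  rw [gridT, setAverage_eq, measureReal_def, volume_gridCell hk,
    ENNReal.toReal_ofReal (by positivity), inv_pow, inv_inv, smul_eq_mul]

theorem tendsto_setAverage_of_continuousAt {α ι : Type*} [TopologicalSpace α] [MeasurableSpace α]
    {μ : Measure α} {l : Filter ι} {a : ι → Set α} {f : α → ℝ} {x : α}
    (hf : ContinuousAt f x) (ha : Tendsto a l (𝓝 x).smallSets)
    (hint : ∀ᶠ i in l, IntegrableOn f (a i) μ) (hpos : ∀ᶠ i in l, μ (a i) ≠ 0)
    (hfin : ∀ᶠ i in l, μ (a i) ≠ ⊤) :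
    Tendsto (fun i => ⨍ y in a i, f y ∂μ) l (𝓝 (f x)) := by
  rw [tendsto_order]
  constructor
  · intro c hc
    filter_upwards [tendsto_smallSets_iff.1 ha _ (hf.eventually (lt_mem_nhds hc)),
      hint, hpos, hfin] with i hsub hi h0 htop
    obtain ⟨y, hy, hle⟩ := exists_le_setAverage h0 htop hi
    exact (hsub hy).trans_le hle
  · intro c hc
    filter_upwards [tendsto_smallSets_iff.1 ha _ (hf.eventually (gt_mem_nhds hc)),
      hint, hpos, hfin] with i hsub hi h0 htop
    obtain ⟨y, hy, hle⟩ := exists_setAverage_le h0 htop hi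
    exact hle.trans_lt (hsub hy)

theorem tendsto_gridT {N : ℕ} {f : (Fin N → ℝ) → ℝ} {s : Set (Fin N → ℝ)} {v : Fin N → ℝ}
    (hf : ContinuousOn f s) (hs : s ∈ 𝓝 v) :
    Tendsto (fun k => gridT N k f v) atTop (𝓝 (f v)) := by
  obtain ⟨r, hr, hball⟩ := Metric.nhds_basis_closedBall.mem_iff.1 hs
  have hcells := tendsto_gridCell_smallSets N v
  have hint : ∀ᶠ k in atTop, IntegrableOn f (gridCell N k v) := by
    filter_upwards [tendsto_smallSets_iff.1 hcells _ (Metric.closedBall_mem_nhds v hr)] with k hk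
    exact ((hf.mono hball).integrableOn_compact (isCompact_closedBall v r)).mono_set hk
  refine (tendsto_setAverage_of_continuousAt (hf.continuousAt hs) hcells hint ?_ ?_).congr' ?_
  all_goals filter_upwards [eventually_gt_atTop 0] with k hk
  · exact (volume_gridCell hk v ▸ ENNReal.ofReal_pos.2 (by positivity)).ne'
  · exact volume_gridCell hk v ▸ ENNReal.ofReal_ne_top
  · exact (gridT_eq_setAverage hk f v).symm

lemma AffiliatedOn.mono {N : ℕ} {f : (Fin N → ℝ) → ℝ} {s t : Set (Fin N → ℝ)}
    (hf : AffiliatedOn f s) (hts : t ⊆ s) : AffiliatedOn f t :=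
  fun x hx y hy => hf x (hts hx) y (hts hy)

theorem AffiliatedOn.of_tendsto {N : ℕ} {ι : Type*} {l : Filter ι} [l.NeBot]
    {g : ι → (Fin N → ℝ) → ℝ} {f : (Fin N → ℝ) → ℝ} {s : Set (Fin N → ℝ)} (hs : IsSublattice s)
    (hg : ∀ᶠ i in l, AffiliatedOn (g i) s) (hlim : ∀ x ∈ s, Tendsto (fun i => g i x) l (𝓝 (f x))) :
    AffiliatedOn f s := fun x hx y hy =>
  le_of_tendsto_of_tendsto ((hlim x hx).mul (hlim y hy))
    ((hlim _ (hs.supClosed hx hy)).mul (hlim _ (hs.infClosed hx hy)))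
    (hg.mono fun _ hi => hi x hx y hy)

theorem affiliatedOn_closure {N : ℕ} {f : (Fin N → ℝ) → ℝ} {s : Set (Fin N → ℝ)}
    (hs : IsSublattice s) (hcont : ContinuousOn f (closure s)) (hf : AffiliatedOn f s) :
    AffiliatedOn f (closure s) := by
  intro x hx y hy
  have hpair : ∀ {op : (Fin N → ℝ) → (Fin N → ℝ) → (Fin N → ℝ)}, Continuous (Function.uncurry op) →
      (∀ a ∈ s, ∀ b ∈ s, op a b ∈ s) →
      ContinuousOn (fun p : (Fin N → ℝ) × (Fin N → ℝ) => f (op p.1 p.2)) (closure (s ×ˢ s)) :=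
    fun hop hmem => hcont.comp hop.continuousOn
      (MapsTo.closure (fun p hp => hmem _ hp.1 _ hp.2) hop)
  have hsup : Continuous fun p : (Fin N → ℝ) × (Fin N → ℝ) => p.1 ⊔ p.2 :=
    continuous_pi fun n => ((continuous_apply n).comp continuous_fst).max
      ((continuous_apply n).comp continuous_snd)
  have hinf : Continuous fun p : (Fin N → ℝ) × (Fin N → ℝ) => p.1 ⊓ p.2 :=
    continuous_pi fun n => ((continuous_apply n).comp continuous_fst).min
      ((continuous_apply n).comp continuous_snd)
  have hxy : (x, y) ∈ closure (s ×ˢ s) := by rw [closure_prod_eq]; exact ⟨hx, hy⟩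
  exact le_on_closure (s := s ×ˢ s) (fun p hp => hf p.1 hp.1 p.2 hp.2)
    ((hpair continuous_fst fun a ha _ _ => ha).mul (hpair continuous_snd fun _ _ b hb => hb))
    ((hpair hsup hs.supClosed).mul (hpair hinf hs.infClosed)) hxy

lemma closure_univ_pi_Ioo {ι α : Type*} [LinearOrder α] [TopologicalSpace α] [OrderTopology α]
    [DenselyOrdered α] {a b : ι → α} (hab : ∀ i, a i ≠ b i) :
    closure (univ.pi fun i => Ioo (a i) (b i)) = Icc a b := by
  rw [closure_pi_set, ← pi_univ_Icc]
  exact pi_congr rfl fun i _ => closure_Ioo (hab i)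

theorem affiliated_of_all_grid_affiliated_general (N : ℕ)
    (f : (Fin N → ℝ) → ℝ)
    (hcont : ContinuousOn f (Set.Icc 0 1))
    (hgrid : ∀ k : ℕ, 0 < k → AffiliatedOn (gridT N k f) (Set.Icc 0 1)) :
    AffiliatedOn f (Set.Icc 0 1) := by
  set cube : Set (Fin N → ℝ) := univ.pi fun _ => Ioo 0 1
  have hcube : closure cube = Icc 0 1 := closure_univ_pi_Ioo fun _ => zero_ne_one
  have hsublattice : IsSublattice cube := isSublattice_pi fun _ _ => LinearOrder.isSublattice _
  rw [← hcube] at hcont hgrid ⊢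
  refine affiliatedOn_closure hsublattice hcont
    (.of_tendsto (l := atTop) (g := fun k => gridT N k f) hsublattice ?_ ?_)
  · filter_upwards [eventually_gt_atTop 0] with k hk
    exact (hgrid k hk).mono subset_closure
  · intro v hv
    exact tendsto_gridT hcont (mem_of_superset
      ((isOpen_set_pi finite_univ fun _ _ => isOpen_Ioo).mem_nhds hv) subset_closure)

/-- If `f` is a continuous, symmetric probability density on `[0,1]^N` and the
equispaced grid distribution `T^k(f)` is affiliated for every positive integer `k`, then `f`
is affiliated. -/
theorem affiliated_of_all_grid_affiliated (N : ℕ) (hN : 1 ≤ N)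
    (f : (Fin N → ℝ) → ℝ)
    (hcont : ContinuousOn f (Set.Icc 0 1))
    (hnonneg : ∀ v ∈ Set.Icc (0 : Fin N → ℝ) 1, 0 ≤ f v)
    (hprob : ∫ v in Set.Icc (0 : Fin N → ℝ) 1, f v = 1)
    (hsymm : ∀ (φ : Equiv.Perm (Fin N)) (v : Fin N → ℝ), f (v ∘ φ) = f v)
    (hgrid : ∀ k : ℕ, 0 < k → AffiliatedOn (gridT N k f) (Set.Icc 0 1)) :
    AffiliatedOn f (Set.Icc 0 1) :=
  affiliated_of_all_grid_affiliated_general N f hcont hgrid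
end

section
/- Let a, b, c, d, e, f, g, h, i, j be strictly positive real numbers and define the symmetric array [P] on {1,2,3}³ (invariant under all permutations of its three coordinates) by [P](1,1,1)=a, [P](2,1,1)=d, [P](2,2,1)=b, [P](2,2,2)=h, [P](3,1,1)=e, [P](3,2,1)=f, [P](3,2,2)=g, [P](3,3,1)=c, [P](3,3,2)=i, [P](3,3,3)=j. If the nine inequalities a·b ≥ d², b·c ≥ f², d·f ≥ b·e, d·h ≥ b², h·i ≥ g², b·g ≥ f·h, e·g ≥ f², g·j ≥ i², and f·i ≥ c·g hold, then [P] is affiliated (MTP₂): for all x, y ∈ {1,2,3}³, [P](x ∨ y) · [P](x ∧ y) ≥ [P](x) · [P](y), where ∨ and ∧ denote the componentwise maximum and minimum. -/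
set_option maxHeartbeats 4000000 in
/-- For the symmetric array `[P]` on `{1,2,3}³` (here indexed by `Fin 3 → Fin 3`,
with index `i ∈ {1,2,3}` corresponding to `i - 1 ∈ Fin 3`) determined by the ten values
`a,…,j` on sorted indices, the nine listed inequalities imply that `[P]` is affiliated
(MTP₂): `[P](x ∨ y) · [P](x ∧ y) ≥ [P](x) · [P](y)` for all `x, y`, with `∨`, `∧` the
componentwise max and min. -/
theorem three_bidder_three_value_affiliation
    (a b c d e f g h i j : ℝ)
    (ha : 0 < a) (hb : 0 < b) (hc : 0 < c) (hd : 0 < d) (he : 0 < e)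
    (hf : 0 < f) (hg : 0 < g) (hh : 0 < h) (hi : 0 < i) (hj : 0 < j)
    (P : (Fin 3 → Fin 3) → ℝ)
    (hsymm : ∀ (φ : Equiv.Perm (Fin 3)) (x : Fin 3 → Fin 3), P (x ∘ φ) = P x)
    (h111 : P ![0, 0, 0] = a) (h211 : P ![1, 0, 0] = d) (h221 : P ![1, 1, 0] = b)
    (h222 : P ![1, 1, 1] = h) (h311 : P ![2, 0, 0] = e) (h321 : P ![2, 1, 0] = f)
    (h322 : P ![2, 1, 1] = g) (h331 : P ![2, 2, 0] = c) (h332 : P ![2, 2, 1] = i)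
    (h333 : P ![2, 2, 2] = j)
    (i1 : a * b ≥ d ^ 2) (i2 : b * c ≥ f ^ 2) (i3 : d * f ≥ b * e)
    (i4 : d * h ≥ b ^ 2) (i5 : h * i ≥ g ^ 2) (i6 : b * g ≥ f * h)
    (i7 : e * g ≥ f ^ 2) (i8 : g * j ≥ i ^ 2) (i9 : f * i ≥ c * g) :
    ∀ x y : Fin 3 → Fin 3, P (x ⊔ y) * P (x ⊓ y) ≥ P x * P y := by
  have K1 : b * a ≥ d * d := by
    have H := i1.le
    linarith only [H]
  have K2 : f * a ≥ d * e := by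
    have H := mul_le_mul (i1.le) i3.le (by positivity) (by positivity)
    refine le_of_mul_le_mul_right ?_ (show (0:ℝ) < b*d by positivity)
    linarith only [H]
  have K3 : h * a ≥ d * b := by
    have H := mul_le_mul (i1.le) i4.le (by positivity) (by positivity)
    refine le_of_mul_le_mul_right ?_ (show (0:ℝ) < b*d by positivity)
    linarith only [H]
  have K4 : g * a ≥ d * f := by
    have H := mul_le_mul (mul_le_mul (i1.le) i4.le (by positivity) (by positivity)) i6.le (by positivity) (by positivity)
    refine le_of_mul_le_mul_right ?_ (show (0:ℝ) < b*b*d*h by positivity)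
    linarith only [H]
  have K5 : i * a ≥ d * c := by
    have H := mul_le_mul (mul_le_mul (mul_le_mul (i1.le) i4.le (by positivity) (by positivity)) i6.le (by positivity) (by positivity)) i9.le (by positivity) (by positivity)
    refine le_of_mul_le_mul_right ?_ (show (0:ℝ) < b*b*d*f*g*h by positivity)
    linarith only [H]
  have K6 : f * a ≥ e * d := by
    have H := mul_le_mul (i1.le) i3.le (by positivity) (by positivity)
    refine le_of_mul_le_mul_right ?_ (show (0:ℝ) < b*d by positivity)
    linarith only [H]
  have K7 : f * d ≥ e * b := by
    have H := i3.le
    linarith only [H]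
  have K8 : c * a ≥ e * e := by
    have H := mul_le_mul (mul_le_mul (mul_le_mul (i1.le) i2.le (by positivity) (by positivity)) i3.le (by positivity) (by positivity)) i3.le (by positivity) (by positivity)
    refine le_of_mul_le_mul_right ?_ (show (0:ℝ) < b*b*d*d*f*f by positivity)
    linarith only [H]
  have K9 : c * d ≥ e * f := by
    have H := mul_le_mul (i2.le) i3.le (by positivity) (by positivity)
    refine le_of_mul_le_mul_right ?_ (show (0:ℝ) < b*f by positivity)
    linarith only [H]
  have K10 : g * a ≥ e * b := by
    have H := mul_le_mul (mul_le_mul (mul_le_mul (i1.le) i3.le (by positivity) (by positivity)) i4.le (by positivity) (by positivity)) i6.le (by positivity) (by positivity)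
    refine le_of_mul_le_mul_right ?_ (show (0:ℝ) < b*b*d*d*f*h by positivity)
    linarith only [H]
  have K11 : g * d ≥ e * h := by
    have H := mul_le_mul (i3.le) i6.le (by positivity) (by positivity)
    refine le_of_mul_le_mul_right ?_ (show (0:ℝ) < b*f by positivity)
    linarith only [H]
  have K12 : i * a ≥ e * f := by
    have H := mul_le_mul (mul_le_mul (mul_le_mul (mul_le_mul (mul_le_mul (i1.le) i3.le (by positivity) (by positivity)) i4.le (by positivity) (by positivity)) i5.le (by positivity) (by positivity)) i6.le (by positivity) (by positivity)) i6.le (by positivity) (by positivity)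
    refine le_of_mul_le_mul_right ?_ (show (0:ℝ) < b*b*b*d*d*f*g*g*h*h by positivity)
    linarith only [H]
  have K13 : i * d ≥ e * g := by
    have H := mul_le_mul (mul_le_mul (i3.le) i5.le (by positivity) (by positivity)) i6.le (by positivity) (by positivity)
    refine le_of_mul_le_mul_right ?_ (show (0:ℝ) < b*f*g*h by positivity)
    linarith only [H]
  have K14 : j * a ≥ e * c := by
    have H := mul_le_mul (mul_le_mul (mul_le_mul (mul_le_mul (mul_le_mul (mul_le_mul (mul_le_mul (i1.le) i3.le (by positivity) (by positivity)) i4.le (by positivity) (by positivity)) i5.le (by positivity) (by positivity)) i6.le (by positivity) (by positivity)) i6.le (by positivity) (by positivity)) i8.le (by positivity) (by positivity)) i9.le (by positivity) (by positivity)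
    refine le_of_mul_le_mul_right ?_ (show (0:ℝ) < b*b*b*d*d*f*f*g*g*g*h*h*i*i by positivity)
    linarith only [H]
  have K15 : j * d ≥ e * i := by
    have H := mul_le_mul (mul_le_mul (mul_le_mul (i3.le) i5.le (by positivity) (by positivity)) i6.le (by positivity) (by positivity)) i8.le (by positivity) (by positivity)
    refine le_of_mul_le_mul_right ?_ (show (0:ℝ) < b*f*g*g*h*i by positivity)
    linarith only [H]
  have K16 : f * d ≥ b * e := by
    have H := i3.le
    linarith only [H]
  have K17 : h * a ≥ b * d := by
    have H := mul_le_mul (i1.le) i4.le (by positivity) (by positivity)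
    refine le_of_mul_le_mul_right ?_ (show (0:ℝ) < b*d by positivity)
    linarith only [H]
  have K18 : h * d ≥ b * b := by
    have H := i4.le
    linarith only [H]
  have K19 : g * d ≥ b * f := by
    have H := mul_le_mul (i4.le) i6.le (by positivity) (by positivity)
    refine le_of_mul_le_mul_right ?_ (show (0:ℝ) < b*h by positivity)
    linarith only [H]
  have K20 : g * a ≥ b * e := by
    have H := mul_le_mul (mul_le_mul (mul_le_mul (i1.le) i3.le (by positivity) (by positivity)) i4.le (by positivity) (by positivity)) i6.le (by positivity) (by positivity)
    refine le_of_mul_le_mul_right ?_ (show (0:ℝ) < b*b*d*d*f*h by positivity)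
    linarith only [H]
  have K21 : i * d ≥ b * c := by
    have H := mul_le_mul (mul_le_mul (i4.le) i6.le (by positivity) (by positivity)) i9.le (by positivity) (by positivity)
    refine le_of_mul_le_mul_right ?_ (show (0:ℝ) < b*f*g*h by positivity)
    linarith only [H]
  have K22 : c * d ≥ f * e := by
    have H := mul_le_mul (i2.le) i3.le (by positivity) (by positivity)
    refine le_of_mul_le_mul_right ?_ (show (0:ℝ) < b*f by positivity)
    linarith only [H]
  have K23 : c * b ≥ f * f := by
    have H := i2.le
    linarith only [H]
  have K24 : g * a ≥ f * d := by
    have H := mul_le_mul (mul_le_mul (i1.le) i4.le (by positivity) (by positivity)) i6.le (by positivity) (by positivity)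
    refine le_of_mul_le_mul_right ?_ (show (0:ℝ) < b*b*d*h by positivity)
    linarith only [H]
  have K25 : g * d ≥ f * b := by
    have H := mul_le_mul (i4.le) i6.le (by positivity) (by positivity)
    refine le_of_mul_le_mul_right ?_ (show (0:ℝ) < b*h by positivity)
    linarith only [H]
  have K26 : g * e ≥ f * f := by
    have H := i7.le
    linarith only [H]
  have K27 : g * b ≥ f * h := by
    have H := i6.le
    linarith only [H]
  have K28 : i * d ≥ f * f := by
    have H := mul_le_mul (mul_le_mul (mul_le_mul (i4.le) i5.le (by positivity) (by positivity)) i6.le (by positivity) (by positivity)) i6.le (by positivity) (by positivity)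
    refine le_of_mul_le_mul_right ?_ (show (0:ℝ) < b*b*g*g*h*h by positivity)
    linarith only [H]
  have K29 : i * b ≥ f * g := by
    have H := mul_le_mul (i5.le) i6.le (by positivity) (by positivity)
    refine le_of_mul_le_mul_right ?_ (show (0:ℝ) < g*h by positivity)
    linarith only [H]
  have K30 : i * a ≥ f * e := by
    have H := mul_le_mul (mul_le_mul (mul_le_mul (mul_le_mul (mul_le_mul (i1.le) i3.le (by positivity) (by positivity)) i4.le (by positivity) (by positivity)) i5.le (by positivity) (by positivity)) i6.le (by positivity) (by positivity)) i6.le (by positivity) (by positivity)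
    refine le_of_mul_le_mul_right ?_ (show (0:ℝ) < b*b*b*d*d*f*g*g*h*h by positivity)
    linarith only [H]
  have K31 : i * e ≥ f * c := by
    have H := mul_le_mul (i7.le) i9.le (by positivity) (by positivity)
    refine le_of_mul_le_mul_right ?_ (show (0:ℝ) < f*g by positivity)
    linarith only [H]
  have K32 : j * d ≥ f * c := by
    have H := mul_le_mul (mul_le_mul (mul_le_mul (mul_le_mul (mul_le_mul (i4.le) i5.le (by positivity) (by positivity)) i6.le (by positivity) (by positivity)) i6.le (by positivity) (by positivity)) i8.le (by positivity) (by positivity)) i9.le (by positivity) (by positivity)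
    refine le_of_mul_le_mul_right ?_ (show (0:ℝ) < b*b*f*g*g*g*h*h*i*i by positivity)
    linarith only [H]
  have K33 : j * b ≥ f * i := by
    have H := mul_le_mul (mul_le_mul (i5.le) i6.le (by positivity) (by positivity)) i8.le (by positivity) (by positivity)
    refine le_of_mul_le_mul_right ?_ (show (0:ℝ) < g*g*h*i by positivity)
    linarith only [H]
  have K34 : i * a ≥ c * d := by
    have H := mul_le_mul (mul_le_mul (mul_le_mul (i1.le) i4.le (by positivity) (by positivity)) i6.le (by positivity) (by positivity)) i9.le (by positivity) (by positivity)
    refine le_of_mul_le_mul_right ?_ (show (0:ℝ) < b*b*d*f*g*h by positivity)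
    linarith only [H]
  have K35 : i * d ≥ c * b := by
    have H := mul_le_mul (mul_le_mul (i4.le) i6.le (by positivity) (by positivity)) i9.le (by positivity) (by positivity)
    refine le_of_mul_le_mul_right ?_ (show (0:ℝ) < b*f*g*h by positivity)
    linarith only [H]
  have K36 : i * e ≥ c * f := by
    have H := mul_le_mul (i7.le) i9.le (by positivity) (by positivity)
    refine le_of_mul_le_mul_right ?_ (show (0:ℝ) < f*g by positivity)
    linarith only [H]
  have K37 : i * b ≥ c * h := by
    have H := mul_le_mul (i6.le) i9.le (by positivity) (by positivity)
    refine le_of_mul_le_mul_right ?_ (show (0:ℝ) < f*g by positivity)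
    linarith only [H]
  have K38 : i * f ≥ c * g := by
    have H := i9.le
    linarith only [H]
  have K39 : j * a ≥ c * e := by
    have H := mul_le_mul (mul_le_mul (mul_le_mul (mul_le_mul (mul_le_mul (mul_le_mul (mul_le_mul (i1.le) i3.le (by positivity) (by positivity)) i4.le (by positivity) (by positivity)) i5.le (by positivity) (by positivity)) i6.le (by positivity) (by positivity)) i6.le (by positivity) (by positivity)) i8.le (by positivity) (by positivity)) i9.le (by positivity) (by positivity)
    refine le_of_mul_le_mul_right ?_ (show (0:ℝ) < b*b*b*d*d*f*f*g*g*g*h*h*i*i by positivity)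
    linarith only [H]
  have K40 : j * d ≥ c * f := by
    have H := mul_le_mul (mul_le_mul (mul_le_mul (mul_le_mul (mul_le_mul (i4.le) i5.le (by positivity) (by positivity)) i6.le (by positivity) (by positivity)) i6.le (by positivity) (by positivity)) i8.le (by positivity) (by positivity)) i9.le (by positivity) (by positivity)
    refine le_of_mul_le_mul_right ?_ (show (0:ℝ) < b*b*f*g*g*g*h*h*i*i by positivity)
    linarith only [H]
  have K41 : j * e ≥ c * c := by
    have H := mul_le_mul (mul_le_mul (mul_le_mul (i7.le) i8.le (by positivity) (by positivity)) i9.le (by positivity) (by positivity)) i9.le (by positivity) (by positivity)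
    refine le_of_mul_le_mul_right ?_ (show (0:ℝ) < f*f*g*g*i*i by positivity)
    linarith only [H]
  have K42 : j * b ≥ c * g := by
    have H := mul_le_mul (mul_le_mul (mul_le_mul (i5.le) i6.le (by positivity) (by positivity)) i8.le (by positivity) (by positivity)) i9.le (by positivity) (by positivity)
    refine le_of_mul_le_mul_right ?_ (show (0:ℝ) < f*g*g*h*i*i by positivity)
    linarith only [H]
  have K43 : j * f ≥ c * i := by
    have H := mul_le_mul (i8.le) i9.le (by positivity) (by positivity)
    refine le_of_mul_le_mul_right ?_ (show (0:ℝ) < g*i by positivity)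
    linarith only [H]
  have K44 : g * d ≥ h * e := by
    have H := mul_le_mul (i3.le) i6.le (by positivity) (by positivity)
    refine le_of_mul_le_mul_right ?_ (show (0:ℝ) < b*f by positivity)
    linarith only [H]
  have K45 : g * b ≥ h * f := by
    have H := i6.le
    linarith only [H]
  have K46 : i * b ≥ h * c := by
    have H := mul_le_mul (i6.le) i9.le (by positivity) (by positivity)
    refine le_of_mul_le_mul_right ?_ (show (0:ℝ) < f*g by positivity)
    linarith only [H]
  have K47 : i * d ≥ g * e := by
    have H := mul_le_mul (mul_le_mul (i3.le) i5.le (by positivity) (by positivity)) i6.le (by positivity) (by positivity)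
    refine le_of_mul_le_mul_right ?_ (show (0:ℝ) < b*f*g*h by positivity)
    linarith only [H]
  have K48 : i * b ≥ g * f := by
    have H := mul_le_mul (i5.le) i6.le (by positivity) (by positivity)
    refine le_of_mul_le_mul_right ?_ (show (0:ℝ) < g*h by positivity)
    linarith only [H]
  have K49 : i * f ≥ g * c := by
    have H := i9.le
    linarith only [H]
  have K50 : i * h ≥ g * g := by
    have H := i5.le
    linarith only [H]
  have K51 : j * b ≥ g * c := by
    have H := mul_le_mul (mul_le_mul (mul_le_mul (i5.le) i6.le (by positivity) (by positivity)) i8.le (by positivity) (by positivity)) i9.le (by positivity) (by positivity)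
    refine le_of_mul_le_mul_right ?_ (show (0:ℝ) < f*g*g*h*i*i by positivity)
    linarith only [H]
  have K52 : j * h ≥ g * i := by
    have H := mul_le_mul (i5.le) i8.le (by positivity) (by positivity)
    refine le_of_mul_le_mul_right ?_ (show (0:ℝ) < g*i by positivity)
    linarith only [H]
  have K53 : j * d ≥ i * e := by
    have H := mul_le_mul (mul_le_mul (mul_le_mul (i3.le) i5.le (by positivity) (by positivity)) i6.le (by positivity) (by positivity)) i8.le (by positivity) (by positivity)
    refine le_of_mul_le_mul_right ?_ (show (0:ℝ) < b*f*g*g*h*i by positivity)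
    linarith only [H]
  have K54 : j * b ≥ i * f := by
    have H := mul_le_mul (mul_le_mul (i5.le) i6.le (by positivity) (by positivity)) i8.le (by positivity) (by positivity)
    refine le_of_mul_le_mul_right ?_ (show (0:ℝ) < g*g*h*i by positivity)
    linarith only [H]
  have K55 : j * f ≥ i * c := by
    have H := mul_le_mul (i8.le) i9.le (by positivity) (by positivity)
    refine le_of_mul_le_mul_right ?_ (show (0:ℝ) < g*i by positivity)
    linarith only [H]
  have K56 : j * h ≥ i * g := by
    have H := mul_le_mul (i5.le) i8.le (by positivity) (by positivity)
    refine le_of_mul_le_mul_right ?_ (show (0:ℝ) < g*i by positivity)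
    linarith only [H]
  have K57 : j * g ≥ i * i := by
    have H := i8.le
    linarith only [H]
  have s01 : ∀ u v w : Fin 3, P ![u, v, w] = P ![v, u, w] := by
    intro u v w
    have h := hsymm (Equiv.swap 0 1) ![v, u, w]
    have e : (![v, u, w] : Fin 3 → Fin 3) ∘ (Equiv.swap 0 1) = ![u, v, w] := by
      funext k; fin_cases k <;> simp [Equiv.swap_apply_def]
    rw [e] at h; exact h
  have s12 : ∀ u v w : Fin 3, P ![u, v, w] = P ![u, w, v] := by
    intro u v w
    have h := hsymm (Equiv.swap 1 2) ![u, w, v]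
    have e : (![u, w, v] : Fin 3 → Fin 3) ∘ (Equiv.swap 1 2) = ![u, v, w] := by
      funext k; fin_cases k <;> simp [Equiv.swap_apply_def]
    rw [e] at h; exact h
  have C000 : P ![(0:Fin 3), 0, 0] = a := by exact h111
  have C001 : P ![(0:Fin 3), 0, 1] = d := by rw [s12, s01]; exact h211
  have C002 : P ![(0:Fin 3), 0, 2] = e := by rw [s12, s01]; exact h311
  have C010 : P ![(0:Fin 3), 1, 0] = d := by rw [s01]; exact h211
  have C011 : P ![(0:Fin 3), 1, 1] = b := by rw [s01, s12]; exact h221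
  have C012 : P ![(0:Fin 3), 1, 2] = f := by rw [s01, s12, s01]; exact h321
  have C020 : P ![(0:Fin 3), 2, 0] = e := by rw [s01]; exact h311
  have C021 : P ![(0:Fin 3), 2, 1] = f := by rw [s01, s12]; exact h321
  have C022 : P ![(0:Fin 3), 2, 2] = c := by rw [s01, s12]; exact h331
  have C100 : P ![(1:Fin 3), 0, 0] = d := by exact h211
  have C101 : P ![(1:Fin 3), 0, 1] = b := by rw [s12]; exact h221
  have C102 : P ![(1:Fin 3), 0, 2] = f := by rw [s12, s01]; exact h321
  have C110 : P ![(1:Fin 3), 1, 0] = b := by exact h221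
  have C111 : P ![(1:Fin 3), 1, 1] = h := by exact h222
  have C112 : P ![(1:Fin 3), 1, 2] = g := by rw [s12, s01]; exact h322
  have C120 : P ![(1:Fin 3), 2, 0] = f := by rw [s01]; exact h321
  have C121 : P ![(1:Fin 3), 2, 1] = g := by rw [s01]; exact h322
  have C122 : P ![(1:Fin 3), 2, 2] = i := by rw [s01, s12]; exact h332
  have C200 : P ![(2:Fin 3), 0, 0] = e := by exact h311
  have C201 : P ![(2:Fin 3), 0, 1] = f := by rw [s12]; exact h321
  have C202 : P ![(2:Fin 3), 0, 2] = c := by rw [s12]; exact h331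
  have C210 : P ![(2:Fin 3), 1, 0] = f := by exact h321
  have C211 : P ![(2:Fin 3), 1, 1] = g := by exact h322
  have C212 : P ![(2:Fin 3), 1, 2] = i := by rw [s12]; exact h332
  have C220 : P ![(2:Fin 3), 2, 0] = c := by exact h331
  have C221 : P ![(2:Fin 3), 2, 1] = i := by exact h332
  have C222 : P ![(2:Fin 3), 2, 2] = j := by exact h333
  have U00 : (0:Fin 3) ⊔ 0 = 0 := rfl
  have I00 : (0:Fin 3) ⊓ 0 = 0 := rfl
  have U01 : (0:Fin 3) ⊔ 1 = 1 := rfl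
  have I01 : (0:Fin 3) ⊓ 1 = 0 := rfl
  have U02 : (0:Fin 3) ⊔ 2 = 2 := rfl
  have I02 : (0:Fin 3) ⊓ 2 = 0 := rfl
  have U10 : (1:Fin 3) ⊔ 0 = 1 := rfl
  have I10 : (1:Fin 3) ⊓ 0 = 0 := rfl
  have U11 : (1:Fin 3) ⊔ 1 = 1 := rfl
  have I11 : (1:Fin 3) ⊓ 1 = 1 := rfl
  have U12 : (1:Fin 3) ⊔ 2 = 2 := rfl
  have I12 : (1:Fin 3) ⊓ 2 = 1 := rfl
  have U20 : (2:Fin 3) ⊔ 0 = 2 := rfl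
  have I20 : (2:Fin 3) ⊓ 0 = 0 := rfl
  have U21 : (2:Fin 3) ⊔ 1 = 2 := rfl
  have I21 : (2:Fin 3) ⊓ 1 = 1 := rfl
  have U22 : (2:Fin 3) ⊔ 2 = 2 := rfl
  have I22 : (2:Fin 3) ⊓ 2 = 2 := rfl
  have key : ∀ p q r s t u : Fin 3,
      P ![p ⊔ s, q ⊔ t, r ⊔ u] * P ![p ⊓ s, q ⊓ t, r ⊓ u] ≥ P ![p, q, r] * P ![s, t, u] := by
    have h3 : ∀ v : Fin 3, v = 0 ∨ v = 1 ∨ v = 2 := by decide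
    intro p q r s t u
    rcases h3 p with rfl | rfl | rfl <;> rcases h3 q with rfl | rfl | rfl <;>
      rcases h3 r with rfl | rfl | rfl <;> rcases h3 s with rfl | rfl | rfl <;>
      rcases h3 t with rfl | rfl | rfl <;> rcases h3 u with rfl | rfl | rfl <;>
      simp only [U00, U01, U02, U10, U11, U12, U20, U21, U22,
        I00, I01, I02, I10, I11, I12, I20, I21, I22,
        C000, C001, C002, C010, C011, C012, C020, C021, C022, C100, C101, C102, C110, C111, C112, C120, C121, C122, C200, C201, C202, C210, C211, C212, C220, C221, C222] <;>
      first
        | assumption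
        | exact le_of_eq (by ring)
  intro x y
  have hx : x = ![x 0, x 1, x 2] := by funext k; fin_cases k <;> rfl
  have hy : y = ![y 0, y 1, y 2] := by funext k; fin_cases k <;> rfl
  have hs : x ⊔ y = ![x 0 ⊔ y 0, x 1 ⊔ y 1, x 2 ⊔ y 2] := by funext k; fin_cases k <;> rfl
  have hi' : x ⊓ y = ![x 0 ⊓ y 0, x 1 ⊓ y 1, x 2 ⊓ y 2] := by funext k; fin_cases k <;> rfl
  rw [hs, hi']
  conv_rhs => rw [hx, hy]
  exact key (x 0) (x 1) (x 2) (y 0) (y 1) (y 2)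
end

section
/- Let N ≥ 1 and let f : ℝ^N → ℝ be strictly positive (the same holds with ℝ replaced by any product of linearly ordered sets, e.g., {1,…,k}^N). Then f is MTP₂ — i.e., f(x ∨ y) · f(x ∧ y) ≥ f(x) · f(y) for all x, y ∈ ℝ^N, where ∨ and ∧ are the componentwise maximum and minimum — if and only if f is TP₂ in every pair of coordinates, i.e., the inequality f(x ∨ y) · f(x ∧ y) ≥ f(x) · f(y) holds for all pairs x, y that differ in at most two coordinates. -/
/-!
Write `m` for `x` with one coordinate `i` lowered to `y i`, where `y i < x i`. Then `m ≤ x` and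
`x ⊓ y ≤ m`, so in the distributive lattice of points `m ⊓ y = x ⊓ y` and `x ⊓ (m ⊔ y) = m`;
multiplying the TP₂ inequalities for `(m, y)` and `(x, m ⊔ y)` and cancelling `f m * f (m ⊔ y)`
gives the one for `(x, y)`. If `y < x` in a second coordinate `j` as well, both pairs differ in
fewer coordinates than `(x, y)`: `(m, y)` agrees at `i`, `(x, m ⊔ y)` at `j`. So induction on the
number of differing coordinates reduces everything to pairs differing in at most two of them.
-/

def TP2At {L : Type*} [Lattice L] (f : L → ℝ) (x y : L) : Prop :=
  f x * f y ≤ f (x ⊔ y) * f (x ⊓ y)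

theorem TP2At.symm {L : Type*} [Lattice L] {f : L → ℝ} {x y : L} (h : TP2At f x y) :
    TP2At f y x := by
  rwa [TP2At, sup_comm, inf_comm, mul_comm (f y)]

theorem TP2At.of_le_of_inf_le {L : Type*} [DistribLattice L] {f : L → ℝ} (hpos : ∀ x, 0 < f x)
    {x y m : L} (hmx : m ≤ x) (hm : x ⊓ y ≤ m) (h₁ : TP2At f m y) (h₂ : TP2At f x (m ⊔ y)) :
    TP2At f x y := by
  have hinf : m ⊓ y = x ⊓ y := le_antisymm (inf_le_inf_right y hmx) (le_inf hm inf_le_right)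
  have hsup : x ⊔ (m ⊔ y) = x ⊔ y := by rw [← sup_assoc, sup_eq_left.mpr hmx]
  have hmid : x ⊓ (m ⊔ y) = m := by rw [inf_sup_left, inf_eq_right.mpr hmx, sup_eq_left.mpr hm]
  rw [TP2At, hinf] at h₁
  rw [TP2At, hsup, hmid] at h₂
  have hprod := mul_le_mul h₁ h₂ (by positivity [hpos x, hpos (m ⊔ y)])
    (by positivity [hpos (m ⊔ y), hpos (x ⊓ y)])
  refine le_of_mul_le_mul_left (a := f m * f (m ⊔ y)) ?_ (by positivity [hpos m, hpos (m ⊔ y)])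
  linarith

theorem ncard_ne_lt_of_agree {ι : Type*} {α : ι → Type*} [Finite ι] {x y u v : ∀ i, α i}
    (hsub : ∀ k, u k ≠ v k → x k ≠ y k) {i : ι} (hi : x i ≠ y i) (hui : u i = v i) :
    {k | u k ≠ v k}.ncard < {k | x k ≠ y k}.ncard :=
  Set.ncard_lt_ncard ((Set.ssubset_iff_of_subset hsub).mpr ⟨i, hi, fun h => h hui⟩)

section Product

variable {ι : Type*} {α : ι → Type*} [∀ i, LinearOrder (α i)]

theorem ncard_ne_le_add [Finite ι] (x y : ∀ i, α i) :
    {i | x i ≠ y i}.ncard ≤ {i | y i < x i}.ncard + {i | x i < y i}.ncard :=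
  calc {i | x i ≠ y i}.ncard ≤ ({i | y i < x i} ∪ {i | x i < y i}).ncard :=
        Set.ncard_le_ncard (fun i hi => (lt_or_gt_of_ne hi).symm)
    _ ≤ _ := Set.ncard_union_le _ _

theorem TP2At.of_two_coord_gt [Finite ι] [DecidableEq ι] {f : (∀ i, α i) → ℝ}
    (hpos : ∀ x, 0 < f x) {x y : ∀ i, α i}
    (ih : ∀ u v : ∀ i, α i, {k | u k ≠ v k}.ncard < {k | x k ≠ y k}.ncard → TP2At f u v)
    {i j : ι} (hij : i ≠ j) (hi : y i < x i) (hj : y j < x j) : TP2At f x y := by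
  set m := Function.update x i (y i)
  have hmx : m ≤ x := update_le_self_iff.mpr hi.le
  have hm : x ⊓ y ≤ m := le_update_iff.mpr ⟨inf_le_right, fun k _ => inf_le_left⟩
  have hmi : m i = y i := Function.update_self i (y i) x
  have hm_ne : ∀ k ≠ i, m k = x k := fun k hk => Function.update_of_ne hk _ _
  refine TP2At.of_le_of_inf_le hpos hmx hm (ih _ _ ?_) (ih _ _ ?_)
  · refine ncard_ne_lt_of_agree (fun k hk => ?_) hi.ne' hmi
    rcases eq_or_ne k i with rfl | hki
    · exact hi.ne'
    · rwa [hm_ne k hki] at hk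
  · refine ncard_ne_lt_of_agree (fun k hk hxy => hk ?_) hj.ne' ?_
    · rw [Pi.sup_apply, ← hxy, sup_eq_right.mpr (hmx k)]
    · rw [Pi.sup_apply, hm_ne j hij.symm, sup_eq_left.mpr hj.le]

theorem TP2At.of_ncard_ne_le_two [Finite ι] {f : (∀ i, α i) → ℝ} (hpos : ∀ x, 0 < f x)
    (h₂ : ∀ x y : ∀ i, α i, {i | x i ≠ y i}.ncard ≤ 2 → TP2At f x y) (x y : ∀ i, α i) :
    TP2At f x y := by
  classical
  induction hd : {i | x i ≠ y i}.ncard using Nat.strong_induction_on generalizing x y with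
  | _ d ih =>
    have ih' : ∀ u v : ∀ i, α i, {k | u k ≠ v k}.ncard < d → TP2At f u v :=
      fun u v huv => ih _ huv u v rfl
    subst hd
    rcases lt_or_ge 1 {i | y i < x i}.ncard with hgt | hgt
    · obtain ⟨i, j, hi, hj, hij⟩ := (Set.one_lt_ncard_iff (Set.toFinite _)).mp hgt
      exact TP2At.of_two_coord_gt hpos ih' hij hi hj
    rcases lt_or_ge 1 {i | x i < y i}.ncard with hlt | hlt
    · obtain ⟨i, j, hi, hj, hij⟩ := (Set.one_lt_ncard_iff (Set.toFinite _)).mp hlt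
      have ih'' : ∀ u v : ∀ i, α i, {k | u k ≠ v k}.ncard < {k | y k ≠ x k}.ncard →
          TP2At f u v := by
        simpa only [ne_comm] using ih'
      exact (TP2At.of_two_coord_gt hpos ih'' hij hi hj).symm
    exact h₂ x y ((ncard_ne_le_add x y).trans (by omega))

end Product

theorem mtp2_iff_pairwise_tp2_general (N : ℕ) (f : (Fin N → ℝ) → ℝ)
    (hpos : ∀ x, 0 < f x) :
    (∀ x y : Fin N → ℝ, f (x ⊔ y) * f (x ⊓ y) ≥ f x * f y) ↔
      (∀ x y : Fin N → ℝ, Set.ncard {n | x n ≠ y n} ≤ 2 →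
        f (x ⊔ y) * f (x ⊓ y) ≥ f x * f y) :=
  ⟨fun h x y _ => h x y, fun h₂ x y => TP2At.of_ncard_ne_le_two hpos h₂ x y⟩

/-- A strictly positive function on `ℝ^N` is MTP₂ if and only if it is TP₂ in
every pair of coordinates, i.e. the MTP₂ inequality holds for all pairs of points differing
in at most two coordinates. -/
theorem mtp2_iff_pairwise_tp2 (N : ℕ) (hN : 1 ≤ N) (f : (Fin N → ℝ) → ℝ)
    (hpos : ∀ x, 0 < f x) :
    (∀ x y : Fin N → ℝ, f (x ⊔ y) * f (x ⊓ y) ≥ f x * f y) ↔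
      (∀ x y : Fin N → ℝ, Set.ncard {n | x n ≠ y n} ≤ 2 →
        f (x ⊔ y) * f (x ⊓ y) ≥ f x * f y) :=
  mtp2_iff_pairwise_tp2_general N f hpos
end

section
/- Let f : ℝ² → ℝ be a strictly positive measurable function that is TP₂, i.e., f(max(x,x'), max(y,y')) · f(min(x,x'), min(y,y')) ≥ f(x,y) · f(x',y') for all (x,y), (x',y') ∈ ℝ². Fix v₂ ∈ ℝ and suppose that for every v₁ the function t ↦ f(v₁, t) is integrable on (−∞, v₂]. Then the inverse hazard rate v₁ ↦ (∫_{−∞}^{v₂} f(v₁, t) dt) / f(v₁, v₂) is nonincreasing in v₁: if v₁ ≤ v₁', then (∫_{−∞}^{v₂} f(v₁', t) dt) / f(v₁', v₂) ≤ (∫_{−∞}^{v₂} f(v₁, t) dt) / f(v₁, v₂). -/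
open MeasureTheory

/-- If `f : ℝ² → ℝ` is strictly positive, measurable and TP₂, and for every
`v₁` the map `t ↦ f(v₁, t)` is integrable on `(−∞, v₂]`, then the inverse hazard rate
`v₁ ↦ (∫_{−∞}^{v₂} f(v₁,t) dt) / f(v₁, v₂)` is nonincreasing in `v₁`. -/
theorem tp2_implies_decreasing_inverse_hazard_rate
    (f : ℝ × ℝ → ℝ) (hmeas : Measurable f) (hpos : ∀ p, 0 < f p)
    (htp2 : ∀ x x' y y' : ℝ,
      f (max x x', max y y') * f (min x x', min y y') ≥ f (x, y) * f (x', y'))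
    (v₂ : ℝ)
    (hint : ∀ v₁ : ℝ, IntegrableOn (fun t => f (v₁, t)) (Set.Iic v₂)) :
    ∀ v₁ v₁' : ℝ, v₁ ≤ v₁' →
      (∫ t in Set.Iic v₂, f (v₁', t)) / f (v₁', v₂) ≤
        (∫ t in Set.Iic v₂, f (v₁, t)) / f (v₁, v₂) := by
  intro v₁ v₁' h
  rw [div_le_div_iff₀ (hpos (v₁', v₂)) (hpos (v₁, v₂)), ← integral_mul_const,
    ← integral_mul_const]
  refine setIntegral_mono_on (((hint v₁').mul_const _)) ((hint v₁).mul_const _)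
    measurableSet_Iic ?_
  intro t ht
  have := htp2 v₁' v₁ t v₂
  rw [sup_eq_left.mpr h, sup_eq_right.mpr (Set.mem_Iic.mp ht), inf_eq_right.mpr h,
    inf_eq_left.mpr (Set.mem_Iic.mp ht)] at this
  linarith [this]
end

section
/- Let f : ℝ² → ℝ be a strictly positive measurable function that is TP₂, i.e., f(max(x,x'), max(y,y')) · f(min(x,x'), min(y,y')) ≥ f(x,y) · f(x',y') for all (x,y), (x',y') ∈ ℝ², and suppose that for every v₁ the function t ↦ f(v₁, t) is integrable on ℝ with ∫_ℝ f(v₁,t) dt > 0. Then f satisfies positive regression dependence: for every fixed v₂ ∈ ℝ, the conditional distribution function v₁ ↦ F_{V₂|V₁}(v₂|v₁) = (∫_{−∞}^{v₂} f(v₁, t) dt) / (∫_ℝ f(v₁, t) dt) is nonincreasing in v₁. -/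
open MeasureTheory

lemma setIntegral_pos_of_pos {s : Set ℝ} (hs : MeasurableSet s) (hμ : 0 < volume s)
    (g : ℝ → ℝ) (hg : ∀ x, 0 < g x) (hgi : IntegrableOn g s) :
    0 < ∫ t in s, g t := by
  rw [setIntegral_pos_iff_support_of_nonneg_ae
    (Filter.Eventually.of_forall fun x => (hg x).le) hgi]
  have : Function.support g = Set.univ := by
    ext x; simp [Function.support, (hg x).ne']
  rw [this, Set.univ_inter]
  exact hμ

/-- If `f : ℝ² → ℝ` is strictly positive, measurable and TP₂, with
`t ↦ f(v₁, t)` integrable on `ℝ` and of positive total integral for every `v₁`, then `f`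
satisfies positive regression dependence: for every `v₂`, the conditional distribution
function `v₁ ↦ (∫_{−∞}^{v₂} f(v₁,t) dt) / (∫_ℝ f(v₁,t) dt)` is nonincreasing in `v₁`. -/
theorem tp2_implies_positive_regression_dependence
    (f : ℝ × ℝ → ℝ) (hmeas : Measurable f) (hpos : ∀ p, 0 < f p)
    (htp2 : ∀ x x' y y' : ℝ,
      f (max x x', max y y') * f (min x x', min y y') ≥ f (x, y) * f (x', y'))
    (hint : ∀ v₁ : ℝ, Integrable (fun t => f (v₁, t)))
    (hintpos : ∀ v₁ : ℝ, 0 < ∫ t, f (v₁, t)) :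
    ∀ v₂ : ℝ, Antitone (fun v₁ : ℝ =>
      (∫ t in Set.Iic v₂, f (v₁, t)) / ∫ t, f (v₁, t)) := by
  intro v₂ a b hab
  simp only
  set Ia := ∫ t in Set.Iic v₂, f (a, t) with hIa
  set Ib := ∫ t in Set.Iic v₂, f (b, t) with hIb
  set Ja := ∫ t in Set.Ioi v₂, f (a, t) with hJa
  set Jb := ∫ t in Set.Ioi v₂, f (b, t) with hJb
  have hIicA : IntegrableOn (fun t => f (a, t)) (Set.Iic v₂) := (hint a).integrableOn
  have hIicB : IntegrableOn (fun t => f (b, t)) (Set.Iic v₂) := (hint b).integrableOn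
  have hIoiA : IntegrableOn (fun t => f (a, t)) (Set.Ioi v₂) := (hint a).integrableOn
  have hIoiB : IntegrableOn (fun t => f (b, t)) (Set.Ioi v₂) := (hint b).integrableOn
  have hsplitA : Ia + Ja = ∫ t, f (a, t) := intervalIntegral.integral_Iic_add_Ioi hIicA hIoiA
  have hsplitB : Ib + Jb = ∫ t, f (b, t) := intervalIntegral.integral_Iic_add_Ioi hIicB hIoiB
  have hIapos : 0 < Ia := setIntegral_pos_of_pos measurableSet_Iic (by simp)
    _ (fun t => hpos _) hIicA
  have hIbpos : 0 < Ib := setIntegral_pos_of_pos measurableSet_Iic (by simp)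
    _ (fun t => hpos _) hIicB
  have hJapos : 0 < Ja := setIntegral_pos_of_pos measurableSet_Ioi (by simp)
    _ (fun t => hpos _) hIoiA
  have hJbpos : 0 < Jb := setIntegral_pos_of_pos measurableSet_Ioi (by simp)
    _ (fun t => hpos _) hIoiB
  -- key inequality: Ib * Ja ≤ Ia * Jb
  have key : Ib * Ja ≤ Ia * Jb := by
    have h1 : Ib * Ja = ∫ s in Set.Iic v₂, f (b, s) * Ja := by
      rw [integral_mul_const]
    have h2 : Ia * Jb = ∫ s in Set.Iic v₂, f (a, s) * Jb := by
      rw [integral_mul_const]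
    rw [h1, h2]
    apply setIntegral_mono_on (hIicB.mul_const _) (hIicA.mul_const _) measurableSet_Iic
    intro s hs
    have e1 : f (b, s) * Ja = ∫ t in Set.Ioi v₂, f (b, s) * f (a, t) := by
      rw [integral_const_mul]
    have e2 : f (a, s) * Jb = ∫ t in Set.Ioi v₂, f (a, s) * f (b, t) := by
      rw [integral_const_mul]
    rw [e1, e2]
    apply setIntegral_mono_on (hIoiA.const_mul _) (hIoiB.const_mul _) measurableSet_Ioi
    intro t ht
    have hst : s ≤ t := le_trans hs (le_of_lt ht)
    have := htp2 a b t s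
    rw [max_eq_right hab, min_eq_left hab, max_eq_left hst, min_eq_right hst] at this
    linarith
  rw [← hsplitA, ← hsplitB, div_le_div_iff₀ (by linarith) (by linarith)]
  nlinarith
end

section
/- Let f : ℝ² → ℝ be a nonnegative integrable measurable function (a joint density of (V₁, V₂) up to normalization) with marginal m(v₁) = ∫_ℝ f(v₁, t) dt satisfying m(v₁) > 0 for all v₁, and suppose ∫_{−∞}^{v₁} m(u) du > 0 for all v₁. If f satisfies positive regression dependence — for every v₂, the map v₁ ↦ (∫_{−∞}^{v₂} f(v₁, t) dt)/m(v₁) is nonincreasing — then f is left-tail decreasing in v₁: for every v₂, the map v₁ ↦ (∫_{−∞}^{v₁} ∫_{−∞}^{v₂} f(u, t) dt du) / (∫_{−∞}^{v₁} m(u) du), i.e., Pr(V₂ ≤ v₂ | V₁ ≤ v₁), is nonincreasing in v₁. -/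
open MeasureTheory

/-- Let `f : ℝ² → ℝ` be a nonnegative integrable measurable function with
everywhere positive marginal `m(v₁) = ∫ f(v₁,t) dt` and positive left-tail marginal mass
`∫_{−∞}^{v₁} m(u) du > 0`. If `f` satisfies positive regression dependence (for each `v₂`,
`v₁ ↦ (∫_{−∞}^{v₂} f(v₁,t) dt)/m(v₁)` is nonincreasing), then `f` is left-tail decreasing
in `v₁`: for each `v₂`, `Pr(V₂ ≤ v₂ | V₁ ≤ v₁)` is nonincreasing in `v₁`. -/
theorem prd_implies_left_tail_decreasing
    (f : ℝ × ℝ → ℝ) (hmeas : Measurable f) (hnonneg : ∀ p, 0 ≤ f p)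
    (hint : Integrable f)
    (hmpos : ∀ v₁ : ℝ, 0 < ∫ t, f (v₁, t))
    (htailpos : ∀ v₁ : ℝ, 0 < ∫ u in Set.Iic v₁, ∫ t, f (u, t))
    (hprd : ∀ v₂ : ℝ, Antitone (fun v₁ : ℝ =>
      (∫ t in Set.Iic v₂, f (v₁, t)) / ∫ t, f (v₁, t))) :
    ∀ v₂ : ℝ, Antitone (fun v₁ : ℝ =>
      (∫ u in Set.Iic v₁, ∫ t in Set.Iic v₂, f (u, t)) /
        ∫ u in Set.Iic v₁, ∫ t, f (u, t)) := by
  intro v₂ a b hab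
  simp only
  set m : ℝ → ℝ := fun u => ∫ t, f (u, t) with hm_def
  set g : ℝ → ℝ := fun u => ∫ t in Set.Iic v₂, f (u, t) with hg_def
  -- each slice is integrable (else its integral would be 0, contradicting positivity)
  have hslice : ∀ u : ℝ, Integrable (fun t => f (u, t)) := by
    intro u
    by_contra h
    have h0 : (∫ t, f (u, t)) = 0 := integral_undef h
    exact lt_irrefl 0 (h0 ▸ hmpos u)
  have hintf : Integrable f ((volume : Measure ℝ).prod volume) := by
    rwa [← Measure.volume_eq_prod]
  have hm_int : Integrable m := hintf.integral_prod_left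
  -- integrability of g
  have hF_int : Integrable (fun p : ℝ × ℝ => (Set.Iic v₂).indicator
      (fun t => f (p.1, t)) p.2) ((volume : Measure ℝ).prod volume) := by
    have : (fun p : ℝ × ℝ => (Set.Iic v₂).indicator (fun t => f (p.1, t)) p.2)
        = (Set.univ ×ˢ Set.Iic v₂).indicator f := by
      funext p
      by_cases h : p.2 ∈ Set.Iic v₂ <;>
        simp [Set.indicator, h, Set.mem_prod]
    rw [this]
    exact hintf.indicator (MeasurableSet.univ.prod measurableSet_Iic)
  have hg_int : Integrable g := by
    have := hF_int.integral_prod_left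
    convert this using 2 with u
    rw [hg_def]
    exact (integral_indicator measurableSet_Iic).symm
  -- pointwise facts
  have hg_nonneg : ∀ u, 0 ≤ g u := fun u =>
    setIntegral_nonneg measurableSet_Iic fun t _ => hnonneg _
  have hm_nonneg : ∀ u, 0 ≤ m u := fun u => integral_nonneg fun t => hnonneg _
  have hgm : ∀ u, g u = (g u / m u) * m u := fun u =>
    (div_mul_cancel₀ _ (hmpos u).ne').symm
  have hr : Antitone (fun u => g u / m u) := hprd v₂
  -- split the integrals over Iic b
  have hunion : Set.Iic a ∪ Set.Ioc a b = Set.Iic b := Set.Iic_union_Ioc_eq_Iic hab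
  have hdisj : Disjoint (Set.Iic a) (Set.Ioc a b) := Set.Iic_disjoint_Ioc le_rfl
  have hsplitg : ∫ u in Set.Iic b, g u
      = (∫ u in Set.Iic a, g u) + ∫ u in Set.Ioc a b, g u := by
    rw [← hunion]
    exact setIntegral_union hdisj measurableSet_Ioc hg_int.integrableOn hg_int.integrableOn
  have hsplitm : ∫ u in Set.Iic b, m u
      = (∫ u in Set.Iic a, m u) + ∫ u in Set.Ioc a b, m u := by
    rw [← hunion]
    exact setIntegral_union hdisj measurableSet_Ioc hm_int.integrableOn hm_int.integrableOn
  set Ga := ∫ u in Set.Iic a, g u with hGa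
  set Ma := ∫ u in Set.Iic a, m u with hMa
  set DG := ∫ u in Set.Ioc a b, g u with hDG
  set DM := ∫ u in Set.Ioc a b, m u with hDM
  have hMa_pos : 0 < Ma := htailpos a
  have hMb_pos : 0 < Ma + DM := by
    have := htailpos b
    rw [show (∫ u in Set.Iic b, ∫ t, f (u, t)) = ∫ u in Set.Iic b, m u from rfl,
      hsplitm] at this
    exact this
  have hDM_nonneg : 0 ≤ DM :=
    setIntegral_nonneg measurableSet_Ioc fun u _ => hm_nonneg u
  set r := g a / m a with hr_def
  -- DG ≤ r * DM
  have hDG_le : DG ≤ r * DM := by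
    rw [hDM, ← MeasureTheory.integral_const_mul]
    apply setIntegral_mono_on hg_int.integrableOn
      ((hm_int.const_mul r).integrableOn) measurableSet_Ioc
    intro u hu
    rw [hgm u]
    exact mul_le_mul_of_nonneg_right (hr hu.1.le) (hm_nonneg u)
  -- r * Ma ≤ Ga
  have hGa_ge : r * Ma ≤ Ga := by
    rw [hMa, ← MeasureTheory.integral_const_mul]
    apply setIntegral_mono_on ((hm_int.const_mul r).integrableOn)
      hg_int.integrableOn measurableSet_Iic
    intro u hu
    rw [hgm u]
    exact mul_le_mul_of_nonneg_right (hr hu) (hm_nonneg u)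
  rw [hsplitg, hsplitm, div_le_div_iff₀ hMb_pos hMa_pos]
  nlinarith [mul_le_mul_of_nonneg_right hDG_le hMa_pos.le,
    mul_le_mul_of_nonneg_right hGa_ge hDM_nonneg]
end

section
/- Let L = ({1,…,k})^N with the componentwise (product) order, which is a finite distributive lattice, and let p : L → ℝ be a nonnegative probability mass function (∑_{x∈L} p(x) = 1) that is affiliated (MTP₂): p(x ∨ y) · p(x ∧ y) ≥ p(x) · p(y) for all x, y ∈ L. Then for all monotone nondecreasing functions g, h : L → ℝ, the covariance of g and h under p is nonnegative: ∑_{x∈L} p(x) g(x) h(x) ≥ (∑_{x∈L} p(x) g(x)) · (∑_{x∈L} p(x) h(x)). -/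
open Finset

/-- (FKG/affiliation covariance inequality.) If `p` is an affiliated (MTP₂)
probability mass function on the finite distributive lattice `({1,…,k})^N` (here
`Fin N → Fin k` with the componentwise order), then every pair of monotone nondecreasing
functions `g, h` has nonnegative covariance under `p`. -/
theorem affiliation_implies_nonneg_covariance (k N : ℕ)
    (p g h : (Fin N → Fin k) → ℝ)
    (hp : ∀ x, 0 ≤ p x)
    (hsum : ∑ x : Fin N → Fin k, p x = 1)
    (haff : ∀ x y : Fin N → Fin k, p (x ⊔ y) * p (x ⊓ y) ≥ p x * p y)
    (hg : Monotone g) (hh : Monotone h) :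
    ∑ x : Fin N → Fin k, p x * g x * h x ≥
      (∑ x : Fin N → Fin k, p x * g x) * (∑ x : Fin N → Fin k, p x * h x) := by
  classical
  have hne : Nonempty (Fin N → Fin k) := by
    by_contra hempty
    rw [not_nonempty_iff] at hempty
    simp [Finset.univ_eq_empty] at hsum
  obtain ⟨x₀⟩ := hne
  -- lower bounds
  obtain ⟨xg, -, hxg⟩ := Finset.exists_min_image Finset.univ g ⟨x₀, Finset.mem_univ _⟩
  obtain ⟨xh, -, hxh⟩ := Finset.exists_min_image Finset.univ h ⟨x₀, Finset.mem_univ _⟩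
  set cg := g xg with hcg
  set ch := h xh with hch
  set g' : (Fin N → Fin k) → ℝ := fun x => g x - cg with hg'
  set h' : (Fin N → Fin k) → ℝ := fun x => h x - ch with hh'
  have hg'0 : 0 ≤ g' := fun x => by
    have := hxg x (Finset.mem_univ x); simp [hg', hcg]; linarith
  have hh'0 : 0 ≤ h' := fun x => by
    have := hxh x (Finset.mem_univ x); simp [hh', hch]; linarith
  have hg'm : Monotone g' := fun a b hab => by
    simp only [hg']; linarith [hg hab]
  have hh'm : Monotone h' := fun a b hab => by
    simp only [hh']; linarith [hh hab]
  have key := fkg g' h' p hp hg'0 hh'0 hg'm hh'm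
    (fun a b => by rw [mul_comm (p (a ⊓ b))]; exact haff a b)
  rw [hsum, one_mul] at key
  have e1 : ∑ a, p a * g' a = (∑ x, p x * g x) - cg := by
    simp only [hg', mul_sub, Finset.sum_sub_distrib, ← Finset.sum_mul, hsum, one_mul]
  have e2 : ∑ a, p a * h' a = (∑ x, p x * h x) - ch := by
    simp only [hh', mul_sub, Finset.sum_sub_distrib, ← Finset.sum_mul, hsum, one_mul]
  have e3 : ∑ a, p a * (g' a * h' a) =
      (∑ x, p x * g x * h x) - ch * (∑ x, p x * g x) - cg * (∑ x, p x * h x) + cg * ch := by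
    have : ∀ a, p a * (g' a * h' a)
        = p a * g a * h a - ch * (p a * g a) - cg * (p a * h a) + cg * ch * p a := by
      intro a; simp only [hg', hh']; ring
    simp only [this, Finset.sum_add_distrib, Finset.sum_sub_distrib, ← Finset.mul_sum, hsum]
    ring
  rw [e1, e2, e3] at key
  nlinarith [key]
end
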